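/- arXiv:1803.06455 — 2 statements merged into one kernel-verified Lean document; each statement's English description precedes it below -/
import Mathlib

section
/- For all natural numbers L, N, and n, the two sums ∑_i 2^{L-i} · C(L,i) · C(N, n-i) and ∑_k C(L,k) · C(N+k, n) are equal. -/
/-!
Both sides are the coefficient of `X ^ n` in `(X + 2) ^ L * (X + 1) ^ N`: the left side expands
`(X + 2) ^ L` binomially in `X` and `2`, the right side in `X + 1` and `1`.
-/

/-- The binomial coefficient `C(a,b)` for a natural number `a` and an integer `b`,
taken to be `0` when `b < 0` (and automatically `0` when `b > a`). -/
def ichoose (a : ℕ) (b : ℤ) : ℕ :=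
  if 0 ≤ b then a.choose b.toNat else 0

open Finset Polynomial

lemma ichoose_natCast_sub_natCast (a n i : ℕ) :
    ichoose a ((n : ℤ) - i) = if i ≤ n then a.choose (n - i) else 0 := by
  unfold ichoose
  split_ifs
  · congr 1; omega
  all_goals omega

lemma coeff_X_pow_mul_X_add_one_pow (a n i : ℕ) :
    (X ^ i * (X + 1) ^ a : ℕ[X]).coeff n = ichoose a ((n : ℤ) - i) := by
  rw [coeff_X_pow_mul', coeff_X_add_one_pow, ichoose_natCast_sub_natCast, Nat.cast_id]

lemma coeff_X_add_two_pow_mul_X_add_one_pow_eq_sum_two_pow (L N n : ℕ) :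
    ((X + 2) ^ L * (X + 1) ^ N : ℕ[X]).coeff n
      = ∑ i ∈ range (L + 1), 2 ^ (L - i) * L.choose i * ichoose N ((n : ℤ) - i) := by
  have hterm (i : ℕ) : (X ^ i * 2 ^ (L - i) * (L.choose i : ℕ[X]) * (X + 1) ^ N : ℕ[X])
      = ((2 ^ (L - i) * L.choose i : ℕ) : ℕ[X]) * (X ^ i * (X + 1) ^ N) := by
    push_cast
    ring
  rw [add_pow, sum_mul, finsetSum_coeff]
  simp only [hterm, coeff_natCast_mul, coeff_X_pow_mul_X_add_one_pow, Nat.cast_id]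

lemma coeff_X_add_two_pow_mul_X_add_one_pow_eq_sum_choose (L N n : ℕ) :
    ((X + 2) ^ L * (X + 1) ^ N : ℕ[X]).coeff n
      = ∑ k ∈ range (L + 1), L.choose k * (N + k).choose n := by
  have hterm (k : ℕ) : ((X + 1) ^ k * 1 ^ (L - k) * (L.choose k : ℕ[X]) * (X + 1) ^ N : ℕ[X])
      = (L.choose k : ℕ[X]) * (X + 1) ^ (N + k) := by
    ring
  rw [show (X + 2 : ℕ[X]) = X + 1 + 1 by ring, add_pow, sum_mul, finsetSum_coeff]
  simp only [hterm, coeff_natCast_mul, coeff_X_add_one_pow, Nat.cast_id]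

/-- For all natural numbers `L`, `N`, `n`:
`∑_i 2^{L-i} C(L,i) C(N, n-i) = ∑_k C(L,k) C(N+k, n)`.
The sums range over all integers with out-of-range binomial coefficients vanishing;
since `C(L,·)` vanishes outside `[0,L]`, it suffices to sum over `0 ≤ i,k ≤ L`. -/
theorem binomial_sum_identity (L N n : ℕ) :
    (∑ i ∈ Finset.range (L + 1),
        2 ^ (L - i) * Nat.choose L i * ichoose N ((n : ℤ) - (i : ℤ)))
      = ∑ k ∈ Finset.range (L + 1), Nat.choose L k * Nat.choose (N + k) n := by
  rw [← coeff_X_add_two_pow_mul_X_add_one_pow_eq_sum_two_pow,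
    coeff_X_add_two_pow_mul_X_add_one_pow_eq_sum_choose]
end

section
/- For natural numbers L and N with N ≥ 1, and each n ≥ 0, the identity ∑_i 2^{L-i}·C(L,i)·C(N-1, n-i) = ∑_k C(L,k)·C(N+k-1, n) holds, where sums range over all integers and out-of-range binomial coefficients vanish. -/
/-!
Expand `C(N - 1 + k, n)` by Vandermonde's identity as `∑ᵢ C(k, i) C(N - 1, n - i)` and exchange
the two sums. The inner sum becomes `∑ₖ C(L, k) C(k, i) = C(L, i) 2^(L - i)`: choosing a `k`-subset
of an `L`-set and then an `i`-subset of it is choosing the `i`-subset first and then an arbitrary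
subset of the remaining `L - i` elements.
-/

open Finset

theorem ichoose_natCast_sub_of_le (a : ℕ) {n i : ℕ} (h : i ≤ n) :
    ichoose a ((n : ℤ) - i) = a.choose (n - i) := by
  rw [ichoose, if_pos (by omega)]
  congr 1
  omega

theorem ichoose_natCast_sub_of_lt (a : ℕ) {n i : ℕ} (h : n < i) :
    ichoose a ((n : ℤ) - i) = 0 :=
  if_neg (by omega)

theorem Nat.sum_range_choose_mul_choose (n s : ℕ) :
    ∑ k ∈ range (n + 1), n.choose k * k.choose s = n.choose s * 2 ^ (n - s) := by
  rcases lt_or_ge n s with hns | hsn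
  · rw [Nat.choose_eq_zero_of_lt hns, zero_mul]
    exact sum_eq_zero fun k hk ↦ by
      rw [Nat.choose_eq_zero_of_lt (show k < s by simp at hk; omega), mul_zero]
  · have hsplit : n + 1 = s + (n - s + 1) := by omega
    have hbelow : ∑ k ∈ range s, n.choose k * k.choose s = 0 :=
      sum_eq_zero fun k hk ↦ by rw [Nat.choose_eq_zero_of_lt (mem_range.1 hk), mul_zero]
    rw [hsplit, sum_range_add, hbelow, zero_add, ← Nat.sum_range_choose, mul_sum]
    refine sum_congr rfl fun j _ ↦ ?_
    rw [Nat.choose_mul (Nat.le_add_right s j), Nat.add_sub_cancel_left]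

theorem Nat.add_choose_eq_sum_ichoose (a k n : ℕ) {m : ℕ} (hkm : k ≤ m) :
    (a + k).choose n = ∑ i ∈ range (m + 1), k.choose i * ichoose a ((n : ℤ) - i) := by
  set f : ℕ → ℕ := fun i ↦ k.choose i * ichoose a ((n : ℤ) - i)
  have hf_gt_n : ∀ i ≥ n + 1, f i = 0 := fun i hi ↦ by
    simp only [f, ichoose_natCast_sub_of_lt a (show n < i by omega), mul_zero]
  have hf_gt_m : ∀ i ≥ m + 1, f i = 0 := fun i hi ↦ by
    simp only [f, Nat.choose_eq_zero_of_lt (show k < i by omega), zero_mul]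
  calc (a + k).choose n
      = ∑ i ∈ range (n + 1), k.choose i * a.choose (n - i) := by
        rw [add_comm, Nat.add_choose_eq, Nat.sum_antidiagonal_eq_sum_range_succ_mk]
    _ = ∑ i ∈ range (n + 1), f i :=
        sum_congr rfl fun i hi ↦ by
          simp only [f]
          rw [ichoose_natCast_sub_of_le a (Nat.lt_succ_iff.1 (mem_range.1 hi))]
    _ = ∑ i ∈ range (m + 1), f i := by
        rw [← eventually_constant_sum hf_gt_n (Nat.le_add_left (n + 1) m),
          eventually_constant_sum hf_gt_m (by omega)]

/-- For natural numbers `L`, `N` with `N ≥ 1`, and each `n ≥ 0`: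
`∑_i 2^{L-i}·C(L,i)·C(N-1, n-i) = ∑_k C(L,k)·C(N+k-1, n)`.
Sums range over all integers with out-of-range binomial coefficients vanishing;
since `C(L,·)` vanishes outside `[0,L]` it suffices to sum over `0 ≤ i,k ≤ L`. -/
theorem dim_boundaries_identity (L N n : ℕ) (hN : 1 ≤ N) :
    (∑ i ∈ Finset.range (L + 1),
        2 ^ (L - i) * Nat.choose L i * ichoose (N - 1) ((n : ℤ) - (i : ℤ)))
      = ∑ k ∈ Finset.range (L + 1), Nat.choose L k * Nat.choose (N + k - 1) n := by
  calc ∑ i ∈ range (L + 1), 2 ^ (L - i) * L.choose i * ichoose (N - 1) ((n : ℤ) - i)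
      = ∑ i ∈ range (L + 1), ∑ k ∈ range (L + 1),
          L.choose k * (k.choose i * ichoose (N - 1) ((n : ℤ) - i)) := by
        refine sum_congr rfl fun i _ ↦ ?_
        simp only [← mul_assoc, ← sum_mul, Nat.sum_range_choose_mul_choose, mul_comm (2 ^ _)]
    _ = ∑ k ∈ range (L + 1), L.choose k * (N + k - 1).choose n := by
        rw [sum_comm]
        refine sum_congr rfl fun k hk ↦ ?_
        rw [← mul_sum, show N + k - 1 = N - 1 + k by omega,
          Nat.add_choose_eq_sum_ichoose _ _ _ (Nat.lt_succ_iff.1 (mem_range.1 hk))]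
end
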